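/- arXiv:1805.02076 — 4 statements merged into one kernel-verified Lean document; each statement's English description precedes it below -/
import Mathlib

section
/- The triple integral ∫₀¹∫₀¹∫₀¹ 1/(1 − xyz) dx dy dz converges and equals ζ(3) = ∑_{k=1}^{∞} 1/k³. -/
/-!
Expand `1 / (1 - xyz) = ∑ₖ (xyz)ᵏ`, valid off the null set where `xyz = 1`, and integrate term by
term, which monotone convergence allows since all terms are nonnegative. Fubini splits
`∫ (xyz)ᵏ` over the cube into three copies of `∫₀¹ xᵏ dx = 1 / (k + 1)`.
-/

open MeasureTheory Set Filter

theorem integrable_and_integral_eq_of_hasSum_of_nonneg {α : Type*} [MeasurableSpace α]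
    {μ : Measure α} {f : ℕ → α → ℝ} {g : α → ℝ} {s : ℝ}
    (hf : ∀ k, Integrable (f k) μ) (hf_nonneg : ∀ k, 0 ≤ᵐ[μ] f k)
    (hfg : ∀ᵐ a ∂μ, HasSum (fun k ↦ f k a) (g a)) (hs : HasSum (fun k ↦ ∫ a, f k a ∂μ) s) :
    Integrable g μ ∧ ∫ a, g a ∂μ = s := by
  have hg_meas : AEStronglyMeasurable g μ :=
    aestronglyMeasurable_of_tendsto_ae atTop
      (fun n ↦ Finset.aestronglyMeasurable_fun_sum _ fun k _ ↦ (hf k).1)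
      (hfg.mono fun _ h ↦ h.tendsto_sum_nat)
  have hf_nonneg' : ∀ᵐ a ∂μ, ∀ k, 0 ≤ f k a := ae_all_iff.2 hf_nonneg
  have hg_nonneg : 0 ≤ᵐ[μ] g := by
    filter_upwards [hfg, hf_nonneg'] with a ha h0 using ha.nonneg h0
  have hlint : ∫⁻ a, ENNReal.ofReal (g a) ∂μ = ENNReal.ofReal s := by
    calc ∫⁻ a, ENNReal.ofReal (g a) ∂μ = ∫⁻ a, ∑' k, ENNReal.ofReal (f k a) ∂μ := by
          refine lintegral_congr_ae ?_
          filter_upwards [hfg, hf_nonneg'] with a ha h0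
          rw [← ENNReal.ofReal_tsum_of_nonneg h0 ha.summable, ha.tsum_eq]
      _ = ∑' k, ∫⁻ a, ENNReal.ofReal (f k a) ∂μ :=
          lintegral_tsum fun k ↦ (hf k).aemeasurable.ennreal_ofReal
      _ = ∑' k, ENNReal.ofReal (∫ a, f k a ∂μ) := by
          simp_rw [ofReal_integral_eq_lintegral_ofReal (hf _) (hf_nonneg _)]
      _ = ENNReal.ofReal s := by
          rw [← ENNReal.ofReal_tsum_of_nonneg (fun k ↦ integral_nonneg_of_ae (hf_nonneg k))
            hs.summable, hs.tsum_eq]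
  refine ⟨⟨hg_meas, (hasFiniteIntegral_iff_ofReal hg_nonneg).2 ?_⟩, ?_⟩
  · rw [hlint]
    exact ENNReal.ofReal_lt_top
  · rw [integral_eq_lintegral_of_nonneg_ae hg_nonneg hg_meas, hlint,
      ENNReal.toReal_ofReal (hs.nonneg fun k ↦ integral_nonneg_of_ae (hf_nonneg k))]

theorem setIntegral_Icc_zero_one_pow (k : ℕ) : ∫ x in Icc (0 : ℝ) 1, x ^ k = 1 / ((k : ℝ) + 1) := by
  rw [integral_Icc_eq_integral_Ioc, ← intervalIntegral.integral_of_le zero_le_one]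
  simp [integral_pow]

theorem setIntegral_unitCube_mul_pow (k : ℕ) :
    ∫ p in Icc (0 : ℝ) 1 ×ˢ Icc (0 : ℝ) 1 ×ˢ Icc (0 : ℝ) 1, (p.1 * p.2.1 * p.2.2) ^ k =
      1 / ((k : ℝ) + 1) ^ 3 := by
  simp_rw [mul_pow, mul_assoc]
  rw [Measure.volume_eq_prod,
    setIntegral_prod_mul (fun x : ℝ ↦ x ^ k) fun q : ℝ × ℝ ↦ q.1 ^ k * q.2 ^ k,
    Measure.volume_eq_prod, setIntegral_prod_mul (fun x : ℝ ↦ x ^ k) fun x : ℝ ↦ x ^ k,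
    setIntegral_Icc_zero_one_pow, one_div, one_div, ← inv_pow]
  ring

/-- On the unit cube `xyz ≤ x`, so `xyz < 1` off the null plane `x = 1`. -/
theorem ae_restrict_unitCube_mul_mem_Ico :
    ∀ᵐ p ∂volume.restrict (Icc (0 : ℝ) 1 ×ˢ Icc (0 : ℝ) 1 ×ˢ Icc (0 : ℝ) 1),
      p.1 * p.2.1 * p.2.2 ∈ Ico 0 1 := by
  have hx : ∀ᵐ p : ℝ × ℝ × ℝ ∂volume, p.1 ≠ 1 := by
    rw [Measure.volume_eq_prod]
    exact Measure.quasiMeasurePreserving_fst.ae (Measure.ae_ne volume 1)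
  have hcube : MeasurableSet (Icc (0 : ℝ) 1 ×ˢ Icc (0 : ℝ) 1 ×ˢ Icc (0 : ℝ) 1) :=
    measurableSet_Icc.prod (measurableSet_Icc.prod measurableSet_Icc)
  filter_upwards [ae_restrict_mem hcube, ae_restrict_of_ae hx] with ⟨x, y, z⟩ ⟨⟨hx0, hx1⟩, ⟨hy0, hy1⟩, ⟨hz0, hz1⟩⟩ hx_ne
  refine ⟨by positivity, ?_⟩
  calc x * y * z ≤ x := by nlinarith [mul_nonneg hx0 hy0, mul_nonneg hx0 hz0]
    _ < 1 := lt_of_le_of_ne hx1 hx_ne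

theorem summable_one_div_nat_add_one_pow_three : Summable fun k : ℕ ↦ 1 / ((k : ℝ) + 1) ^ 3 := by
  have h := (summable_nat_add_iff 1).2 (Real.summable_one_div_nat_pow.2 (by norm_num : 1 < 3))
  simpa using h

/-- The triple integral `∫₀¹∫₀¹∫₀¹ 1/(1-xyz) dx dy dz` converges and equals
`ζ(3) = ∑_{k=1}^∞ 1/k³`. -/
theorem stmt_4 :
    IntegrableOn (fun p : ℝ × ℝ × ℝ => 1 / (1 - p.1 * p.2.1 * p.2.2))
      (Set.Icc 0 1 ×ˢ Set.Icc 0 1 ×ˢ Set.Icc 0 1) volume ∧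
    (∫ p in (Set.Icc (0 : ℝ) 1 ×ˢ Set.Icc (0 : ℝ) 1 ×ˢ Set.Icc (0 : ℝ) 1),
        1 / (1 - p.1 * p.2.1 * p.2.2)) =
      ∑' k : ℕ, 1 / ((k : ℝ) + 1) ^ 3 := by
  refine integrable_and_integral_eq_of_hasSum_of_nonneg
    (f := fun k p ↦ (p.1 * p.2.1 * p.2.2) ^ k) (fun k ↦ ?_) (fun k ↦ ?_) ?_ ?_
  · exact ContinuousOn.integrableOn_compact
      (isCompact_Icc.prod (isCompact_Icc.prod isCompact_Icc)) (by fun_prop)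
  · filter_upwards [ae_restrict_unitCube_mul_mem_Ico] with p hp using pow_nonneg hp.1 k
  · filter_upwards [ae_restrict_unitCube_mul_mem_Ico] with p hp
    simpa only [one_div] using hasSum_geometric_of_lt_one hp.1 hp.2
  · simp_rw [setIntegral_unitCube_mul_pow]
    exact summable_one_div_nat_add_one_pow_three.hasSum
end

section
/- Let n ≥ 1 and s ≥ 3 be integers, and let P_n(x) = a₀ + a₁x + ⋯ + a_n x^n, Q_n(x) = b₀ + b₁x + ⋯ + b_n x^n, T_n(x) = c₀ + c₁x + ⋯ + c_n x^n be polynomials with arbitrary real coefficients. Then the s-fold integral I_s(n) = ∫₀¹⋯∫₀¹ P_n(x₁)Q_n(x₂)T_n(x₃)/(1 − x₁x₂x₃⋯x_s) dx₁ dx₂ dx₃ ⋯ dx_s equals the absolutely convergent series ∑_{k=0}^{∞} (1/(k+1)^{s−3}) ∑_{r₁=0}^{n} ∑_{r₂=0}^{n} ∑_{r₃=0}^{n} a_{r₁} b_{r₂} c_{r₃} / ((r₁+k+1)(r₂+k+1)(r₃+k+1)). -/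
open MeasureTheory Finset

/-!
On the open cube `∏ xᵢ < 1`, and there the integrand is the sum of the geometric series
`∑ₖ P(x₁)Q(x₂)T(x₃) (x₁⋯x_s)ᵏ`. Each term is a product `∏ᵢ wᵢ(xᵢ) xᵢᵏ` with weights
`wᵢ = P, Q, T, 1, …, 1`, so by Fubini its integral is `∏ᵢ ∫₀¹ wᵢ(y) yᵏ dy`: the polynomial factors
give `∑ᵣ aᵣ/(r+k+1)` and each of the other `s - 3` coordinates gives `1/(k+1)`. Bounding
`|wᵢ| ≤ Cᵢ` on `[0,1]` gives `∫ |k-th term| ≤ ∏ Cᵢ/(k+1)^s`, summable since `s ≥ 2`; this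
justifies exchanging sum and integral and yields the absolute convergence.
-/

theorem integral_Icc_zero_one_pow (k : ℕ) :
    ∫ y in Set.Icc (0 : ℝ) 1, y ^ k = 1 / ((k : ℝ) + 1) := by
  rw [integral_Icc_eq_integral_Ioc, ← intervalIntegral.integral_of_le zero_le_one, integral_pow]
  norm_num

theorem integral_Icc_sum_mul_pow (t : Finset ℕ) (d : ℕ → ℝ) (k : ℕ) :
    ∫ y in Set.Icc (0 : ℝ) 1, (∑ r ∈ t, d r * y ^ r) * y ^ k =
      ∑ r ∈ t, d r / ((r : ℝ) + k + 1) := by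
  simp_rw [sum_mul, mul_assoc, ← pow_add]
  rw [integral_finsetSum _ fun r _ => (by fun_prop : Continuous _).integrableOn_Icc]
  refine sum_congr rfl fun r _ => ?_
  rw [integral_const_mul, integral_Icc_zero_one_pow]
  push_cast
  ring

theorem integral_Icc_abs_mul_pow_le {w : ℝ → ℝ} (hw : ContinuousOn w (Set.Icc 0 1)) {C : ℝ}
    (hC : ∀ y ∈ Set.Icc (0 : ℝ) 1, |w y| ≤ C) (k : ℕ) :
    ∫ y in Set.Icc (0 : ℝ) 1, |w y * y ^ k| ≤ C / ((k : ℝ) + 1) := by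
  calc ∫ y in Set.Icc (0 : ℝ) 1, |w y * y ^ k| ≤ ∫ y in Set.Icc (0 : ℝ) 1, C * y ^ k := by
        refine setIntegral_mono_on ?_ (by fun_prop : Continuous _).integrableOn_Icc
          measurableSet_Icc fun y hy => ?_
        · exact ((hw.mul (continuousOn_pow k)).abs).integrableOn_compact isCompact_Icc
        · rw [abs_mul, abs_of_nonneg (pow_nonneg hy.1 k)]
          exact mul_le_mul_of_nonneg_right (hC y hy) (pow_nonneg hy.1 k)
    _ = C / ((k : ℝ) + 1) := by rw [integral_const_mul, integral_Icc_zero_one_pow, mul_one_div]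

section Cube

variable {ι : Type*} [Fintype ι]

theorem integral_Icc_pi_prod (G : ι → ℝ → ℝ) :
    ∫ x in Set.Icc (0 : ι → ℝ) 1, ∏ i, G i (x i) =
      ∏ i, ∫ y in Set.Icc (0 : ℝ) 1, G i y := by
  rw [← Set.pi_univ_Icc, volume_pi, Measure.restrict_pi_pi, integral_fintype_prod_eq_prod]
  rfl

theorem ae_restrict_Icc_prod_mem_Ico [Nonempty ι] :
    ∀ᵐ x ∂volume.restrict (Set.Icc (0 : ι → ℝ) 1), ∏ i, x i ∈ Set.Ico 0 1 := by
  rw [← Measure.restrict_congr_set (μ := volume) Measure.univ_pi_Ioo_ae_eq_Icc]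
  filter_upwards [ae_restrict_mem (MeasurableSet.univ_pi fun _ => measurableSet_Ioo)]
    with x hx
  simp only [Set.mem_univ_pi, Pi.zero_apply, Pi.one_apply, Set.mem_Ioo] at hx
  refine ⟨prod_nonneg fun i _ => (hx i).1.le, ?_⟩
  simpa using
    prod_lt_prod_of_nonempty (fun i _ => (hx i).1) (fun i _ => (hx i).2) univ_nonempty

theorem hasSum_prod_mul_pow (w : ι → ℝ → ℝ) {x : ι → ℝ} (hx : ∏ i, x i ∈ Set.Ico 0 1) :
    HasSum (fun k => ∏ i, w i (x i) * x i ^ k) ((∏ i, w i (x i)) / (1 - ∏ i, x i)) := by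
  simp_rw [prod_mul_distrib, prod_pow, div_eq_mul_inv]
  exact (hasSum_geometric_of_lt_one hx.1 hx.2).mul_left _

theorem integral_Icc_norm_prod_mul_pow_le (w : ι → ℝ → ℝ)
    (hw : ∀ i, ContinuousOn (w i) (Set.Icc 0 1))
    (C : ι → ℝ) (hC : ∀ i, ∀ y ∈ Set.Icc (0 : ℝ) 1, |w i y| ≤ C i) (k : ℕ) :
    ∫ x in Set.Icc (0 : ι → ℝ) 1, ‖∏ i, w i (x i) * x i ^ k‖ ≤
      ∏ i, C i / ((k : ℝ) + 1) := by
  simp_rw [norm_prod, Real.norm_eq_abs]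
  rw [integral_Icc_pi_prod (fun i y => |w i y * y ^ k|)]
  exact prod_le_prod (fun i _ => integral_nonneg fun _ => abs_nonneg _)
    fun i _ => integral_Icc_abs_mul_pow_le (hw i) (hC i) k


variable (w : ι → ℝ → ℝ) (hw : ∀ i, ContinuousOn (w i) (Set.Icc 0 1))
include hw

theorem integrableOn_Icc_prod_mul_pow (k : ℕ) :
    IntegrableOn (fun x => ∏ i, w i (x i) * x i ^ k) (Set.Icc (0 : ι → ℝ) 1) := by
  refine ContinuousOn.integrableOn_compact isCompact_Icc
    (continuousOn_finsetProd _ fun i _ => ?_)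
  exact ((hw i).comp (continuous_apply i).continuousOn fun x hx => ⟨hx.1 i, hx.2 i⟩).mul
    ((continuous_apply i).pow k).continuousOn

theorem summable_integral_Icc_norm_prod_mul_pow (hι : 2 ≤ Fintype.card ι) :
    Summable fun k : ℕ => ∫ x in Set.Icc (0 : ι → ℝ) 1, ‖∏ i, w i (x i) * x i ^ k‖ := by
  choose C hC using fun i => isCompact_Icc.exists_bound_of_continuousOn (hw i)
  have hgeom :
      Summable fun k : ℕ => (∏ i, C i) * (1 / ((k : ℝ) + 1)) ^ Fintype.card ι := by
    refine Summable.mul_left _ ?_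
    have := (summable_nat_add_iff 1).mpr (Real.summable_one_div_nat_pow.mpr hι)
    simpa [div_pow] using this
  refine hgeom.of_nonneg_of_le (fun k => integral_nonneg fun _ => norm_nonneg _) fun k => ?_
  calc _ ≤ ∏ i, C i / ((k : ℝ) + 1) := integral_Icc_norm_prod_mul_pow_le w hw C hC k
    _ = (∏ i, C i) * (1 / ((k : ℝ) + 1)) ^ Fintype.card ι := by
      rw [prod_div_distrib, prod_const, card_univ, div_pow, one_pow, mul_one_div]

theorem summable_abs_prod_integral_Icc_mul_pow (hι : 2 ≤ Fintype.card ι) :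
    Summable fun k : ℕ => |∏ i, ∫ y in Set.Icc (0 : ℝ) 1, w i y * y ^ k| := by
  refine (summable_integral_Icc_norm_prod_mul_pow w hw hι).of_nonneg_of_le
    (fun _ => abs_nonneg _) fun k => ?_
  rw [← integral_Icc_pi_prod (fun i y => w i y * y ^ k)]
  exact norm_integral_le_integral_norm (fun x : ι → ℝ => ∏ i, w i (x i) * x i ^ k)

theorem hasSum_prod_integral_Icc_mul_pow (hι : 2 ≤ Fintype.card ι) :
    HasSum (fun k : ℕ => ∏ i, ∫ y in Set.Icc (0 : ℝ) 1, w i y * y ^ k)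
      (∫ x in Set.Icc (0 : ι → ℝ) 1, (∏ i, w i (x i)) / (1 - ∏ i, x i)) := by
  have : Nonempty ι := Fintype.card_pos_iff.mp (by omega)
  have hsum := hasSum_integral_of_summable_integral_norm
    (integrableOn_Icc_prod_mul_pow w hw) (summable_integral_Icc_norm_prod_mul_pow w hw hι)
  have hseries : (fun x : ι → ℝ => (∏ i, w i (x i)) / (1 - ∏ i, x i))
      =ᵐ[volume.restrict (Set.Icc 0 1)] fun x => ∑' k : ℕ, ∏ i, w i (x i) * x i ^ k := by
    filter_upwards [ae_restrict_Icc_prod_mem_Ico] with x hx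
    exact (hasSum_prod_mul_pow w hx).tsum_eq.symm
  simp_rw [← integral_Icc_pi_prod (fun i y => w i y * y ^ _)]
  rwa [integral_congr_ae hseries]

end Cube

section Append

variable {a m : ℕ}

theorem prod_append_one (u : Fin a → ℝ → ℝ) (x : Fin (a + m) → ℝ) :
    ∏ i, Fin.append u 1 i (x i) = ∏ i, u i (x (Fin.castAdd m i)) := by
  simp [Fin.prod_univ_add]

theorem prod_integral_Icc_append_one_mul_pow (u : Fin a → ℝ → ℝ) (k : ℕ) :
    ∏ i : Fin (a + m), ∫ y in Set.Icc (0 : ℝ) 1, Fin.append u 1 i y * y ^ k =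
      (∏ i, ∫ y in Set.Icc (0 : ℝ) 1, u i y * y ^ k) * (1 / ((k : ℝ) + 1)) ^ m := by
  simp [Fin.prod_univ_add, integral_Icc_zero_one_pow]

end Append

theorem sum_div_mul_sum_div_mul_sum_div {ι K : Type*} [Semifield K] (t : Finset ι)
    (f g h u : ι → K) :
    (∑ i ∈ t, f i / u i) * (∑ i ∈ t, g i / u i) * (∑ i ∈ t, h i / u i) =
      ∑ i ∈ t, ∑ j ∈ t, ∑ l ∈ t, f i * g j * h l / (u i * u j * u l) := by
  rw [sum_mul_sum, sum_mul]
  simp_rw [sum_mul_sum, div_mul_div_comm]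

/-- For `n ≥ 1`, `s ≥ 3` and polynomials `P, Q, T` of degree `n` with arbitrary real
coefficients, the `s`-fold integral of `P(x₁)Q(x₂)T(x₃)/(1-x₁⋯x_s)` over the unit cube
equals the absolutely convergent series
`∑_{k≥0} (k+1)^{-(s-3)} ∑_{r₁,r₂,r₃=0}^n a_{r₁}b_{r₂}c_{r₃}/((r₁+k+1)(r₂+k+1)(r₃+k+1))`. -/
theorem stmt_5 (n s : ℕ) (hs : 3 ≤ s) (a b c : ℕ → ℝ) :
    Summable (fun k : ℕ =>
      |(1 / ((k : ℝ) + 1) ^ (s - 3)) *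
        ∑ r₁ ∈ Finset.range (n + 1), ∑ r₂ ∈ Finset.range (n + 1),
          ∑ r₃ ∈ Finset.range (n + 1),
            a r₁ * b r₂ * c r₃ /
              (((r₁ : ℝ) + k + 1) * ((r₂ : ℝ) + k + 1) * ((r₃ : ℝ) + k + 1))|) ∧
    (∫ x in Set.Icc (0 : Fin s → ℝ) 1,
        (∑ i ∈ Finset.range (n + 1), a i * x ⟨0, by omega⟩ ^ i) *
          (∑ i ∈ Finset.range (n + 1), b i * x ⟨1, by omega⟩ ^ i) *
          (∑ i ∈ Finset.range (n + 1), c i * x ⟨2, by omega⟩ ^ i) /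
          (1 - ∏ i, x i)) =
      ∑' k : ℕ,
        (1 / ((k : ℝ) + 1) ^ (s - 3)) *
          ∑ r₁ ∈ Finset.range (n + 1), ∑ r₂ ∈ Finset.range (n + 1),
            ∑ r₃ ∈ Finset.range (n + 1),
              a r₁ * b r₂ * c r₃ /
                (((r₁ : ℝ) + k + 1) * ((r₂ : ℝ) + k + 1) * ((r₃ : ℝ) + k + 1)) := by
  obtain ⟨m, rfl⟩ := Nat.exists_eq_add_of_le hs
  let poly (d : ℕ → ℝ) (y : ℝ) : ℝ := ∑ i ∈ range (n + 1), d i * y ^ i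
  let w : Fin (3 + m) → ℝ → ℝ := Fin.append ![poly a, poly b, poly c] 1
  have hw : ∀ i, ContinuousOn (w i) (Set.Icc 0 1) := by
    have hpoly (d : ℕ → ℝ) : Continuous (poly d) := by fun_prop
    refine Fin.addCases (fun i => ?_) fun j => ?_
    · fin_cases i
      exacts [(hpoly a).continuousOn, (hpoly b).continuousOn, (hpoly c).continuousOn]
    · simp only [w, Fin.append_right, Pi.one_apply]
      exact continuousOn_const
  have hcard : 2 ≤ Fintype.card (Fin (3 + m)) := by rw [Fintype.card_fin]; omega
  have hweights (x : Fin (3 + m) → ℝ) :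
      ∏ i, w i (x i) =
        poly a (x ⟨0, by omega⟩) * poly b (x ⟨1, by omega⟩) * poly c (x ⟨2, by omega⟩) := by
    rw [prod_append_one, Fin.prod_univ_three]
    rfl
  have hcoeff (k : ℕ) : ∏ i, ∫ y in Set.Icc (0 : ℝ) 1, w i y * y ^ k =
      1 / ((k : ℝ) + 1) ^ (3 + m - 3) * ∑ r₁ ∈ range (n + 1), ∑ r₂ ∈ range (n + 1),
        ∑ r₃ ∈ range (n + 1),
          a r₁ * b r₂ * c r₃ /
            (((r₁ : ℝ) + k + 1) * ((r₂ : ℝ) + k + 1) * ((r₃ : ℝ) + k + 1)) := by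
    rw [prod_integral_Icc_append_one_mul_pow, Fin.prod_univ_three, Nat.add_sub_cancel_left,
      one_div_pow, mul_comm]
    simp only [poly, Matrix.cons_val_zero, Matrix.cons_val_one, Matrix.cons_val_two,
      Matrix.tail_cons, Matrix.head_cons, integral_Icc_sum_mul_pow]
    exact congrArg _ (sum_div_mul_sum_div_mul_sum_div _ _ _ _ _)
  have hsum := hasSum_prod_integral_Icc_mul_pow w hw hcard
  simp only [hcoeff, hweights] at hsum
  exact ⟨(summable_abs_prod_integral_Icc_mul_pow w hw hcard).congr fun k => by rw [hcoeff],
    hsum.tsum_eq.symm⟩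
end

section
/- For every integer r ≥ 1, the series ∑_{k=0}^{∞} 1/((k+1)(r+k+1)²) converges and equals H_r/r² − (ζ(2) − H_r^{(2)})/r, where H_r = ∑_{k=1}^{r} 1/k and H_r^{(2)} = ∑_{k=1}^{r} 1/k². -/
/-!
Partial fractions give `1 / (a (a + r)²) = (1/a - 1/(a + r)) / r² - 1 / (r (a + r)²)`. Summed over
`a = k + 1`, the first part telescopes to `H_r / r²` and the second is `1/r` times the tail
`ζ(2) - H_r⁽²⁾` of the series for `ζ(2)`.
-/

open Finset Filter Topology

theorem Finset.sum_Icc_one_eq_sum_range {M : Type*} [AddCommMonoid M] (f : ℕ → M) (n : ℕ) :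
    ∑ i ∈ Icc 1 n, f i = ∑ i ∈ range n, f (i + 1) := by
  rw [← Ico_add_one_right_eq_Icc, sum_Ico_eq_sum_range, Nat.add_sub_cancel]
  simp only [add_comm 1]

section Telescoping

variable {f : ℕ → ℝ}

theorem Antitone.hasSum_sub_succ (hf : Antitone f) (h0 : Tendsto f atTop (𝓝 0)) :
    HasSum (fun k => f k - f (k + 1)) (f 0) := by
  rw [hasSum_iff_tendsto_nat_of_nonneg (fun k => sub_nonneg.mpr (hf k.le_succ))]
  simpa only [sum_range_sub', sub_zero] using (tendsto_const_nhds (x := f 0)).sub h0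

theorem Antitone.hasSum_sub_add (hf : Antitone f) (h0 : Tendsto f atTop (𝓝 0)) (r : ℕ) :
    HasSum (fun k => f k - f (k + r)) (∑ i ∈ range r, f i) := by
  have hshift (i : ℕ) : HasSum (fun k => f (k + i) - f (k + (i + 1))) (f i) := by
    simpa [add_assoc, add_comm 1] using (hf.comp_monotone (add_left_mono (a := i))).hasSum_sub_succ
      (h0.comp (tendsto_add_atTop_nat i))
  convert hasSum_sum fun i _ => hshift i using 1
  funext k
  simpa using (sum_range_sub' (fun i => f (k + i)) r).symm

end Telescoping

theorem one_div_mul_add_sq_eq {K : Type*} [Field K] {a r : K} (ha : a ≠ 0) (hr : r ≠ 0)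
    (har : r + a ≠ 0) :
    1 / (a * (r + a) ^ 2) = (1 / a - 1 / (a + r)) / r ^ 2 - 1 / (a + r) ^ 2 / r := by
  rw [add_comm a r]
  field_simp
  ring

/-- For every integer `r ≥ 1`, `∑_{k=0}^∞ 1/((k+1)(r+k+1)²)` converges and equals
`H_r/r² - (ζ(2) - H_r⁽²⁾)/r`, where `H_r = ∑_{k=1}^r 1/k`, `H_r⁽²⁾ = ∑_{k=1}^r 1/k²`
and `ζ(2) = ∑_{k=1}^∞ 1/k²`. -/
theorem stmt_7 (r : ℕ) (hr : 1 ≤ r) :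
    HasSum (fun k : ℕ => 1 / (((k : ℝ) + 1) * ((r : ℝ) + k + 1) ^ 2))
      ((∑ i ∈ Finset.Icc 1 r, 1 / (i : ℝ)) / (r : ℝ) ^ 2 -
        ((∑' k : ℕ, 1 / ((k : ℝ) + 1) ^ 2) -
          ∑ i ∈ Finset.Icc 1 r, 1 / (i : ℝ) ^ 2) / r) := by
  set g : ℕ → ℝ := fun k => 1 / ((k : ℝ) + 1)
  set g2 : ℕ → ℝ := fun k => 1 / ((k : ℝ) + 1) ^ 2
  have hg : Antitone g := fun m n hmn => by dsimp [g]; gcongr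
  have harmonic := hg.hasSum_sub_add tendsto_one_div_add_atTop_nhds_zero_nat r
  have hg2 : Summable g2 := by
    simpa [g2] using (summable_nat_add_iff 1).mpr (Real.summable_one_div_nat_pow.mpr one_lt_two)
  have zeta_tail := (hasSum_nat_add_iff' r).mpr hg2.hasSum
  simp only [sum_Icc_one_eq_sum_range, Nat.cast_add_one]
  refine ((harmonic.div_const ((r : ℝ) ^ 2)).sub (zeta_tail.div_const r)).congr_fun fun k => ?_
  simp only [g, g2, Nat.cast_add]
  rw [add_right_comm (k : ℝ), add_assoc (r : ℝ)]
  exact one_div_mul_add_sq_eq (by positivity) (by positivity) (by positivity)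
end

section
/- Let n ≥ 1 be an integer and let P_n be the shifted Legendre polynomial P_n(x) = (1/n!)·(d/dx)^n (x^n (1−x)^n). Then for every integer k ≥ n, the integral ∫₀¹ x^k P_n(x) dx equals (−1)^n · k(k−1)⋯(k−n+1) / ((k+1)(k+2)⋯(k+n)(k+n+1)) = (−1)^n · ∏_{i=0}^{n−1}(k−i) / ∏_{i=1}^{n+1}(k+i). -/
open Polynomial intervalIntegral

/-- The shifted Legendre polynomial `P_n(x) = (1/n!) (d/dx)^n (x^n (1-x)^n)`. -/
noncomputable def shiftedLegendre (n : ℕ) (x : ℝ) : ℝ :=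
  (1 / (n.factorial : ℝ)) * iteratedDeriv n (fun y : ℝ => y ^ n * (1 - y) ^ n) x

noncomputable def J (p : ℝ[X]) : ℝ := ∫ x in (0:ℝ)..1, p.eval x

lemma J_deriv (p : ℝ[X]) : J (derivative p) = p.eval 1 - p.eval 0 :=
  integral_eq_sub_of_hasDerivAt (fun x _ => p.hasDerivAt x)
    ((p.derivative.continuous_aeval).intervalIntegrable _ _)

lemma J_add (p q : ℝ[X]) : J (p + q) = J p + J q := by
  simp only [J, eval_add]
  exact integral_add ((p.continuous_aeval).intervalIntegrable _ _)
    ((q.continuous_aeval).intervalIntegrable _ _)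

lemma J_smul (c : ℝ) (p : ℝ[X]) : J (C c * p) = c * J p := by
  simp only [J, eval_mul, eval_C, integral_const_mul]

lemma iteratedDeriv_eval (m : ℕ) (p : ℝ[X]) :
    iteratedDeriv m (fun x => p.eval x) = fun x => (derivative^[m] p).eval x := by
  induction m generalizing p with
  | zero => simp
  | succ m ih =>
    rw [iteratedDeriv_succ', Function.iterate_succ, Function.comp_apply]
    have hd : (deriv fun x => p.eval x) = fun x => (derivative p).eval x :=
      funext fun x => Polynomial.deriv (p := p)
    rw [hd, ih]

lemma J_pow (a : ℕ) : J (X ^ a) = 1 / (a + 1) := by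
  simp [J, integral_pow]

lemma beta_nat (b a : ℕ) : J (X ^ a * (1 - X) ^ b) =
    (a.factorial : ℝ) * b.factorial / (a + b + 1).factorial := by
  induction b generalizing a with
  | zero =>
    have hf : ((a.factorial:ℝ)) ≠ 0 := Nat.cast_ne_zero.2 (Nat.factorial_ne_zero _)
    simp only [pow_zero, mul_one, J_pow, Nat.factorial_zero, Nat.cast_one, Nat.add_zero]
    rw [Nat.factorial_succ]
    push_cast
    field_simp
  | succ b ih =>
    have key : derivative ((X:ℝ[X]) ^ (a+1) * (1 - X) ^ (b+1)) =
        C ((a:ℝ)+1) * (X ^ a * (1 - X) ^ (b+1)) - C ((b:ℝ)+1) * (X ^ (a+1) * (1 - X) ^ b) := by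
      rw [derivative_mul, derivative_pow, derivative_pow, derivative_X, derivative_sub,
        derivative_one, derivative_X]
      push_cast
      ring
    have h0 : J (derivative ((X:ℝ[X]) ^ (a+1) * (1 - X) ^ (b+1))) = 0 := by
      rw [J_deriv]; simp
    rw [key] at h0
    rw [sub_eq_add_neg, ← neg_mul, ← C_neg] at h0
    rw [J_add, J_smul, J_smul] at h0
    have hb := ih (a + 1)
    have ha1 : ((a:ℝ) + 1) ≠ 0 := by positivity
    have : J (X ^ a * (1 - X) ^ (b+1)) = ((b:ℝ)+1) / ((a:ℝ)+1) * J (X ^ (a+1) * (1 - X) ^ b) := by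
      field_simp at h0 ⊢
      linarith
    rw [this, hb]
    have h1 : (a + 1 + b + 1).factorial = (a + b + 2) * (a + b + 1).factorial := by
      rw [show a + 1 + b + 1 = (a + b + 1) + 1 by ring, Nat.factorial_succ]
    have h2 : (a + (b+1) + 1).factorial = (a + b + 2) * (a + b + 1).factorial := by
      rw [show a + (b + 1) + 1 = (a + b + 1) + 1 by ring, Nat.factorial_succ]
    have h3 : (a+1).factorial = (a+1) * a.factorial := Nat.factorial_succ a
    have h4 : (b+1).factorial = (b+1) * b.factorial := Nat.factorial_succ b
    rw [h1, h2, h3, h4]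
    have hf : ((a+b+1).factorial : ℝ) ≠ 0 := Nat.cast_ne_zero.2 (Nat.factorial_ne_zero _)
    push_cast
    field_simp

lemma step_dvd {a : ℝ} {s : ℕ} {p : ℝ[X]} (h : (X - C a) ^ (s+1) ∣ p) :
    (X - C a) ^ s ∣ derivative p := by
  obtain ⟨r, rfl⟩ := h
  rw [derivative_mul, derivative_pow, derivative_sub, derivative_X, derivative_C, sub_zero,
    mul_one]
  exact dvd_add (dvd_mul_of_dvd_left (dvd_mul_left _ _) r)
    ((pow_dvd_pow _ s.le_succ).mul_right _)

lemma iter_dvd {a : ℝ} (n : ℕ) (p : ℝ[X]) (h : (X - C a)^n ∣ p) (m : ℕ) :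
    (X - C a)^(n - m) ∣ derivative^[m] p := by
  induction m with
  | zero => simpa
  | succ m ih =>
    rw [Function.iterate_succ', Function.comp_apply]
    rcases Nat.eq_zero_or_pos (n - m) with h0 | h1
    · rw [show n - (m+1) = 0 by omega, pow_zero]; exact one_dvd _
    · have : (X - C a) ^ ((n - (m+1)) + 1) ∣ derivative^[m] p := by
        rwa [show (n - (m+1)) + 1 = n - m by omega]
      exact step_dvd this
lemma eval_iter_zero {a : ℝ} (n m : ℕ) (p : ℝ[X]) (h : (X - C a)^n ∣ p) (hm : m < n) :
    (derivative^[m] p).eval a = 0 := by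
  obtain ⟨r, hr⟩ := iter_dvd n p h m
  rw [hr]
  simp [zero_pow (show n - m ≠ 0 by omega)]

lemma vanish (n m : ℕ) (hm : m < n) (a : ℝ) (ha : a = 0 ∨ a = 1) :
    (derivative^[m] ((X:ℝ[X])^n * (1-X)^n)).eval a = 0 := by
  rcases ha with rfl | rfl
  · refine eval_iter_zero n m _ ?_ hm
    rw [C_0, sub_zero]
    exact (dvd_mul_right _ _)
  · refine eval_iter_zero n m _ ?_ hm
    have h1 : ((X : ℝ[X]) - C 1) ∣ (1 - X) := ⟨-1, by rw [C_1]; ring⟩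
    exact ((pow_dvd_pow_of_dvd h1 n).mul_left _)

lemma rec_step (n m j : ℕ) (hm : m < n) (hj : 1 ≤ j) :
    J ((X:ℝ[X])^j * derivative^[m+1] ((X:ℝ[X])^n * (1-X)^n)) =
      -(j:ℝ) * J ((X:ℝ[X])^(j-1) * derivative^[m] ((X:ℝ[X])^n * (1-X)^n)) := by
  set q := derivative^[m] ((X:ℝ[X])^n * (1-X)^n) with hq
  have hiter : derivative^[m+1] ((X:ℝ[X])^n * (1-X)^n) = derivative q := by
    rw [hq, Function.iterate_succ', Function.comp_apply]
  have hd : derivative ((X:ℝ[X])^j * q) =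
      C (j:ℝ) * ((X:ℝ[X])^(j-1) * q) + X^j * derivative q := by
    rw [derivative_mul, derivative_pow, derivative_X, mul_one]
    congr 1
    rw [show C (j:ℝ) = ((j:ℕ) : ℝ[X]) by simp]
    ring
  have h0 : J (derivative ((X:ℝ[X])^j * q)) = 0 := by
    rw [J_deriv]
    simp [eval_mul, hq, zero_pow (show j ≠ 0 by omega), vanish n m hm 0 (Or.inl rfl), vanish n m hm 1 (Or.inr rfl)]
  rw [hd, J_add, J_smul] at h0
  rw [hiter]
  linarith

lemma main_rec (n k : ℕ) (hk : n ≤ k) : ∀ m, m ≤ n →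
    J ((X:ℝ[X])^k * derivative^[n] ((X:ℝ[X])^n*(1-X)^n)) =
    (-1:ℝ)^m * (∏ i ∈ Finset.range m, ((k:ℝ) - i)) *
      J ((X:ℝ[X])^(k-m) * derivative^[n-m] ((X:ℝ[X])^n*(1-X)^n)) := by
  intro m
  induction m with
  | zero => simp
  | succ m ih =>
    intro h
    rw [ih (by omega)]
    have h1 : n - m = (n - (m+1)) + 1 := by omega
    have step := rec_step n (n-(m+1)) (k-m) (by omega) (by omega)
    rw [← h1] at step
    rw [step, show k - m - 1 = k - (m+1) by omega, Finset.prod_range_succ]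
    have hc : ((k - m : ℕ) : ℝ) = (k:ℝ) - m := by
      rw [Nat.cast_sub (by omega : m ≤ k)]
    rw [hc]
    ring

lemma prod_Icc_eq (k : ℕ) : ∀ m : ℕ,
    ∏ i ∈ Finset.Icc 1 m, ((k:ℝ) + i) = ((k+m).factorial : ℝ) / (k.factorial : ℝ) := by
  intro m
  induction m with
  | zero =>
    simp only [Finset.Icc_self, Nat.add_zero]
    rw [Finset.Icc_eq_empty (by omega), Finset.prod_empty,
      eq_comm, div_self (Nat.cast_ne_zero.2 (Nat.factorial_ne_zero _))]
  | succ m ih =>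
    rw [Finset.prod_Icc_succ_top (by omega : 1 ≤ m+1), ih,
      show k + (m+1) = (k+m) + 1 from rfl, Nat.factorial_succ]
    have : ((k.factorial : ℝ)) ≠ 0 := Nat.cast_ne_zero.2 (Nat.factorial_ne_zero _)
    push_cast
    field_simp
    ring

/-- For `n ≥ 1` and `k ≥ n`,
`∫₀¹ x^k P_n(x) dx = (-1)^n · ∏_{i=0}^{n-1}(k-i) / ∏_{i=1}^{n+1}(k+i)`,
where `P_n` is the shifted Legendre polynomial. -/
theorem stmt_14 (n k : ℕ) (hn : 1 ≤ n) (hk : n ≤ k) :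
    ∫ x in (0 : ℝ)..1, x ^ k * shiftedLegendre n x =
      (-1 : ℝ) ^ n * (∏ i ∈ Finset.range n, ((k : ℝ) - i)) /
        ∏ i ∈ Finset.Icc 1 (n + 1), ((k : ℝ) + i) := by
  set p : ℝ[X] := (X:ℝ[X])^n * (1-X)^n with hp
  have hfun : (fun y : ℝ => y ^ n * (1 - y) ^ n) = fun x => p.eval x := by
    funext x; simp [hp]
  have hint : (∫ x in (0:ℝ)..1, x^k * shiftedLegendre n x)
      = (1 / n.factorial : ℝ) * J ((X:ℝ[X])^k * derivative^[n] p) := by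
    rw [J, ← intervalIntegral.integral_const_mul]
    apply intervalIntegral.integral_congr
    intro x _
    simp only [_root_.shiftedLegendre]
    rw [hfun, iteratedDeriv_eval]
    simp only [eval_mul, eval_pow, eval_X]
    ring
  rw [hint, main_rec n k hk n le_rfl, Nat.sub_self, Function.iterate_zero, id_eq]
  have hx : (X:ℝ[X])^(k-n) * p = X^k * (1-X)^n := by
    rw [hp, ← mul_assoc, ← pow_add, Nat.sub_add_cancel hk]
  rw [hx, beta_nat n k, prod_Icc_eq k (n+1), show k + (n+1) = k+n+1 from rfl]
  have h1 : ((k+n+1).factorial : ℝ) ≠ 0 := Nat.cast_ne_zero.2 (Nat.factorial_ne_zero _)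
  have h2 : ((k.factorial : ℝ)) ≠ 0 := Nat.cast_ne_zero.2 (Nat.factorial_ne_zero _)
  have h3 : ((n.factorial : ℝ)) ≠ 0 := Nat.cast_ne_zero.2 (Nat.factorial_ne_zero _)
  rw [show k + n + 1 = n + k + 1 from by omega]
  field_simp
end
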